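/- arXiv:dg-ga/9611011 — 3 statements merged into one kernel-verified Lean document; each statement's English description precedes it below -/
import Mathlib

section
/- The spherical phylon group S(d) is the semidirect product of the orthogonal group O(d) and S^{(1)}(d) = S(d) ∩ P^{(1)}(d): every ψ ∈ S(d) factors uniquely as an orthogonal matrix composed with an element of S(d) whose linear part is the identity. -/
/-!
Let `A` be the linear part of `ψ`. Differentiating `∑ ψᵢ² = ∑ xᵢ²` with respect to `x_j` and
`x_k` and evaluating at `0` gives `2 (AᵀA)_{jk} = 2 δ_{jk}`, so `A` is orthogonal. Then
`φ := Aᵀψ` again satisfies `∑ φᵢ² = ∑ xᵢ²`, has identity linear part, and `ψ = Aφ`.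
Conversely, in any factorization `ψ = Bχ` with `χ` of identity linear part, comparing linear
parts forces `B = A`, and then `χ = Aᵀψ`. A real matrix `M` acts on tuples of series as
`M.map C *ᵥ ·`.
-/

open Finset Matrix

/-- Composition of formal power series: `mvComp f g = f ∘ g`, i.e. the series
`f(g¹(x),…,g^d(x))` (the coefficient formula below is the usual one, valid when the
`g j` have zero constant term). -/
noncomputable def mvComp {d : ℕ} (f : MvPowerSeries (Fin d) ℝ)
    (g : Fin d → MvPowerSeries (Fin d) ℝ) : MvPowerSeries (Fin d) ℝ :=
  fun m =>
    ∑ ν : Fin d → Fin ((m.sum fun _ e => e) + 1),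
      MvPowerSeries.coeff (∑ j, Finsupp.single j (ν j : ℕ)) f *
        MvPowerSeries.coeff m (∏ j, g j ^ (ν j : ℕ))

/-- Membership in the phylon group `P(d)`: a `d`-tuple of formal power series in `d`
variables with zero constant term and invertible linear term. -/
def InPhylon {d : ℕ} (ψ : Fin d → MvPowerSeries (Fin d) ℝ) : Prop :=
  (∀ i, MvPowerSeries.constantCoeff (ψ i) = 0) ∧
    IsUnit (Matrix.of fun i j =>
      MvPowerSeries.coeff (Finsupp.single j 1) (ψ i)).det

namespace MvPowerSeries

variable {σ ι R : Type*} [CommRing R]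

noncomputable def linearPart (ψ : ι → MvPowerSeries σ R) : Matrix ι σ R :=
  Matrix.of fun i j => coeff (Finsupp.single j 1) (ψ i)

theorem linearPart_X [DecidableEq σ] : linearPart (X : σ → MvPowerSeries σ R) = 1 := by
  ext i j
  simp [linearPart, coeff_X, Matrix.one_apply, Finsupp.single_left_inj one_ne_zero, eq_comm]

theorem linearPart_map_C_mulVec [Fintype ι] {κ : Type*} (M : Matrix κ ι R)
    (φ : ι → MvPowerSeries σ R) :
    linearPart (M.map C *ᵥ φ) = M * linearPart φ := by
  ext i k
  simp [linearPart, Matrix.mulVec, dotProduct, Matrix.mul_apply, coeff_C_mul]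

theorem constantCoeff_map_C_mulVec [Fintype ι] {κ : Type*} (M : Matrix κ ι R)
    {φ : ι → MvPowerSeries σ R} (hφ : ∀ j, constantCoeff (φ j) = 0) (i : κ) :
    constantCoeff ((M.map C *ᵥ φ) i) = 0 := by
  simp [Matrix.mulVec, dotProduct, hφ]

theorem map_C_mulVec_map_C_mulVec [Fintype ι] {κ μ : Type*} [Fintype κ] (M : Matrix μ κ R)
    (N : Matrix κ ι R) (φ : ι → MvPowerSeries σ R) :
    M.map C *ᵥ (N.map C *ᵥ φ) = (M * N).map C *ᵥ φ := by
  rw [Matrix.mulVec_mulVec, Matrix.map_mul]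

theorem map_C_mulVec_of_mul_eq_one [Fintype ι] [DecidableEq ι] {κ : Type*} [Fintype κ]
    {M : Matrix ι κ R} {N : Matrix κ ι R} (h : M * N = 1) (φ : ι → MvPowerSeries σ R) :
    M.map C *ᵥ (N.map C *ᵥ φ) = φ := by
  rw [map_C_mulVec_map_C_mulVec, h, Matrix.map_one _ (map_zero C) (map_one C), one_mulVec]

theorem sum_sq_map_C_mulVec [Fintype ι] [DecidableEq ι] {M : Matrix ι ι R} (hM : Mᵀ * M = 1)
    (φ : ι → MvPowerSeries σ R) :
    ∑ i, (M.map C *ᵥ φ) i ^ 2 = ∑ i, φ i ^ 2 := by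
  simp only [sq]
  change (M.map C *ᵥ φ) ⬝ᵥ (M.map C *ᵥ φ) = φ ⬝ᵥ φ
  rw [dotProduct_mulVec, ← Matrix.mulVec_transpose, ← Matrix.transpose_map,
    map_C_mulVec_of_mul_eq_one hM]

theorem constantCoeff_pderiv (i : σ) (f : MvPowerSeries σ R) :
    constantCoeff (pderiv R i f) = coeff (Finsupp.single i 1) f := by
  simpa using coeff_pderiv (R := R) (i := i) f 0

theorem constantCoeff_pderiv_pderiv_mul {f g : MvPowerSeries σ R}
    (hf : constantCoeff f = 0) (hg : constantCoeff g = 0) (j k : σ) :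
    constantCoeff (pderiv R k (pderiv R j (f * g))) =
      coeff (Finsupp.single j 1) f * coeff (Finsupp.single k 1) g +
        coeff (Finsupp.single k 1) f * coeff (Finsupp.single j 1) g := by
  simp only [Derivation.leibniz, smul_eq_mul, map_add, map_mul, constantCoeff_pderiv, hf, hg]
  ring

theorem constantCoeff_pderiv_pderiv_sum_sq [Fintype ι] {ψ : ι → MvPowerSeries σ R}
    (hψ : ∀ i, constantCoeff (ψ i) = 0) (j k : σ) :
    constantCoeff (pderiv R k (pderiv R j (∑ i, ψ i ^ 2))) =
      2 • ((linearPart ψ)ᵀ * linearPart ψ) j k := by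
  simp only [map_sum, sq, constantCoeff_pderiv_pderiv_mul (hψ _) (hψ _), Matrix.mul_apply,
    Matrix.transpose_apply, linearPart, Matrix.of_apply, Finset.smul_sum]
  refine Finset.sum_congr rfl fun i _ => ?_
  ring

theorem transpose_linearPart_mul_self_eq_one [Fintype σ] [DecidableEq σ] [IsAddTorsionFree R]
    {ψ : σ → MvPowerSeries σ R} (hψ : ∀ i, constantCoeff (ψ i) = 0)
    (hsph : ∑ i, ψ i ^ 2 = ∑ i, X i ^ 2) :
    (linearPart ψ)ᵀ * linearPart ψ = 1 := by
  ext j k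
  have h := constantCoeff_pderiv_pderiv_sum_sq hψ j k
  rw [hsph, constantCoeff_pderiv_pderiv_sum_sq (fun i => constantCoeff_X i) j k,
    linearPart_X, Matrix.transpose_one, Matrix.one_mul] at h
  exact nsmul_right_injective two_ne_zero h.symm

theorem linearPart_eq_one_iff [DecidableEq σ] {ψ : σ → MvPowerSeries σ R} :
    linearPart ψ = 1 ↔
      ∀ i j, coeff (Finsupp.single j 1) (ψ i) = if i = j then (1 : R) else 0 := by
  simp [← Matrix.ext_iff, linearPart, Matrix.one_apply]

end MvPowerSeries

open MvPowerSeries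

theorem inPhylon_iff {d : ℕ} {ψ : Fin d → MvPowerSeries (Fin d) ℝ} :
    InPhylon ψ ↔ (∀ i, constantCoeff (ψ i) = 0) ∧ IsUnit (linearPart ψ).det :=
  Iff.rfl

/-- The spherical phylon group `S(d)` (elements of `P(d)` with `‖ψ(x)‖² = ‖x‖²`)
is the semidirect product of `O(d)` and `S^{(1)}(d) = S(d) ∩ P^{(1)}(d)`: every
`ψ ∈ S(d)` factors uniquely as an orthogonal matrix composed with an element of
`S(d)` whose linear part is the identity. -/
theorem spherical_phylon_semidirect (d : ℕ)
    (ψ : Fin d → MvPowerSeries (Fin d) ℝ) (hψ : InPhylon ψ)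
    (hsph : ∑ i, ψ i ^ 2 = ∑ i, (MvPowerSeries.X i : MvPowerSeries (Fin d) ℝ) ^ 2) :
    ∃! p : Matrix (Fin d) (Fin d) ℝ × (Fin d → MvPowerSeries (Fin d) ℝ),
      p.1ᵀ * p.1 = 1 ∧ InPhylon p.2 ∧
      (∀ i j, MvPowerSeries.coeff (Finsupp.single j 1) (p.2 i) =
        if i = j then (1 : ℝ) else 0) ∧
      (∑ i, p.2 i ^ 2 = ∑ i, (MvPowerSeries.X i : MvPowerSeries (Fin d) ℝ) ^ 2) ∧
      (∀ i, ψ i = ∑ j, MvPowerSeries.C (p.1 i j) * p.2 j) := by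
  obtain ⟨hψ₀, -⟩ := hψ
  set A := linearPart ψ
  have hA : Aᵀ * A = 1 := transpose_linearPart_mul_self_eq_one hψ₀ hsph
  have hAAt : A * Aᵀ = 1 := mul_eq_one_comm.mp hA
  have hφ₁ : linearPart (Aᵀ.map C *ᵥ ψ) = 1 := by rw [linearPart_map_C_mulVec, hA]
  refine ⟨(A, Aᵀ.map C *ᵥ ψ), ⟨hA, ?_, linearPart_eq_one_iff.mp hφ₁, ?_, ?_⟩, ?_⟩
  · exact inPhylon_iff.mpr ⟨constantCoeff_map_C_mulVec _ hψ₀, by simp [hφ₁]⟩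
  · rwa [sum_sq_map_C_mulVec (by rwa [Matrix.transpose_transpose])]
  · exact congrFun (map_C_mulVec_of_mul_eq_one hAAt ψ).symm
  · rintro ⟨B, χ⟩ ⟨hB, -, hχ₁, -, hfac⟩
    have hψχ : ψ = B.map C *ᵥ χ := funext hfac
    obtain rfl : linearPart ψ = B := by
      rw [hψχ, linearPart_map_C_mulVec, linearPart_eq_one_iff.mpr hχ₁, Matrix.mul_one]
    exact Prod.ext rfl
      ((congrArg (Aᵀ.map C *ᵥ ·) hψχ).trans (map_C_mulVec_of_mul_eq_one hA χ)).symm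
end

section
/- Let f, g be one-variable formal power series starting with positive-definite quadratic terms (f(x) = (1/2)f_2 x² + ..., f_2 > 0, similarly g). Then there exists a unique ψ in the identity component P_0(1) (formal power series with ψ(0)=0 and ψ'(0) > 0) such that f(ψ^{-1}(x)) = g(x). -/
/-!
If `ψ(0) = 0 = φ(0)` and `X^m ∣ ψ - φ`, then `X^(m+k) ∣ ψ^(k+1) - φ^(k+1)`. Hence, as `g` has no
linear term, the coefficient of `x^(n+2)` in `g ∘ ψ` depends only on `ψ₁, …, ψ_(n+1)`, and on
`ψ_(n+1)` only through the term `2 g₂ ψ₁ ψ_(n+1)` coming from `g₂ ψ²`. The equation `g ∘ ψ = f`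
therefore reads `g₂ ψ₁² = f₂` in degree 2, which has the single positive solution
`ψ₁ = √(f₂ / g₂)`, and in each higher degree a linear equation with nonzero slope `2 g₂ ψ₁` for the
next coefficient of `ψ`.
-/

open PowerSeries

/-- Composition `f ∘ g` of one-variable formal power series, i.e. `f(g(x))`
(the coefficient formula is the usual one, valid when `g` has zero constant term). -/
noncomputable def pcomp (f g : PowerSeries ℝ) : PowerSeries ℝ :=
  PowerSeries.mk fun n =>
    ∑ k ∈ Finset.range (n + 1), PowerSeries.coeff k f * PowerSeries.coeff n (g ^ k)

namespace PowerSeries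

variable {R : Type*} [CommRing R]

theorem X_pow_dvd_pow_succ_sub_pow_succ {a b : R⟦X⟧} (ha : X ∣ a) (hb : X ∣ b)
    {m : ℕ} (hab : X ^ m ∣ a - b) (k : ℕ) : X ^ (m + k) ∣ a ^ (k + 1) - b ^ (k + 1) := by
  induction k with
  | zero => simpa using hab
  | succ k ih =>
    have hsplit : a ^ (k + 2) - b ^ (k + 2) =
        a * (a ^ (k + 1) - b ^ (k + 1)) + b ^ (k + 1) * (a - b) := by ring
    rw [hsplit]
    refine dvd_add ?_ ?_
    · rw [← add_assoc, pow_succ']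
      exact mul_dvd_mul ha ih
    · rw [add_comm, pow_add]
      exact mul_dvd_mul (pow_dvd_pow_of_dvd hb _) hab

theorem coeff_succ_sq_sub_sq {a b : R⟦X⟧} (ha : X ∣ a) (hb : X ∣ b) {n : ℕ}
    (hab : X ^ n ∣ a - b) :
    coeff (n + 1) (a ^ 2 - b ^ 2) = (coeff n a - coeff n b) * (coeff 1 a + coeff 1 b) := by
  obtain ⟨d, hd⟩ := hab
  obtain ⟨e, he⟩ := dvd_add ha hb
  have hsq : a ^ 2 - b ^ 2 = X ^ (n + 1) * (d * e) := by
    rw [sq_sub_sq, he, hd]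
    ring
  have hd0 : coeff n a - coeff n b = constantCoeff d := by
    rw [← map_sub, hd, coeff_X_pow_mul', if_pos le_rfl, Nat.sub_self,
      coeff_zero_eq_constantCoeff_apply]
  have he0 : coeff 1 a + coeff 1 b = constantCoeff e := by
    rw [← map_add, he, coeff_succ_X_mul, coeff_zero_eq_constantCoeff_apply]
  rw [hsq, hd0, he0, ← map_mul, coeff_X_pow_mul', if_pos le_rfl, Nat.sub_self,
    coeff_zero_eq_constantCoeff_apply]

end PowerSeries

theorem coeff_pcomp_sub_coeff_pcomp {g ψ φ : ℝ⟦X⟧} (hg1 : coeff 1 g = 0) (hψ : X ∣ ψ)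
    (hφ : X ∣ φ) {n : ℕ} (hψφ : X ^ (n + 1) ∣ ψ - φ) :
    coeff (n + 2) (pcomp g ψ) - coeff (n + 2) (pcomp g φ) =
      coeff 2 g * ((coeff (n + 1) ψ - coeff (n + 1) φ) * (coeff 1 ψ + coeff 1 φ)) := by
  simp only [pcomp, coeff_mk, ← Finset.sum_sub_distrib, ← mul_sub, ← map_sub]
  rw [Finset.sum_eq_single_of_mem 2 (by simp) ?_, coeff_succ_sq_sub_sq hψ hφ hψφ, map_sub]
  intro k _ hk2
  match k, hk2 with
  | 0, _ => simp
  | 1, _ => simp [hg1]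
  | j + 3, _ =>
    rw [X_pow_dvd_iff.mp (X_pow_dvd_pow_succ_sub_pow_succ hψ hφ hψφ (j + 2)) _ (by omega),
      mul_zero]

theorem eq_of_pcomp_eq_pcomp {g ψ φ : ℝ⟦X⟧} (hg1 : coeff 1 g = 0) (hg2 : 0 < coeff 2 g)
    (hψ0 : constantCoeff ψ = 0) (hφ0 : constantCoeff φ = 0) (hψ1 : 0 < coeff 1 ψ)
    (hφ1 : 0 < coeff 1 φ) (h : pcomp g ψ = pcomp g φ) : ψ = φ := by
  ext n
  induction n using Nat.strong_induction_on with
  | _ n ih =>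
    rcases n with _ | n
    · simp [hψ0, hφ0]
    have hdvd : X ^ (n + 1) ∣ ψ - φ :=
      X_pow_dvd_iff.mpr fun i hi => by rw [map_sub, ih i hi, sub_self]
    have key := coeff_pcomp_sub_coeff_pcomp hg1 (X_dvd_iff.mpr hψ0) (X_dvd_iff.mpr hφ0) hdvd
    rw [h, sub_self, eq_comm] at key
    have hsum : coeff 1 ψ + coeff 1 φ ≠ 0 := by positivity
    simpa [hg2.ne', hsum, sub_eq_zero] using key

/-- `φ` is the truncation of the solution below degree `n + 2`, so by
`coeff_pcomp_sub_coeff_pcomp` this value makes the coefficients of degree `n + 3` agree. -/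
noncomputable def transferCoeff (f g : ℝ⟦X⟧) : ℕ → ℝ
  | 0 => 0
  | 1 => √(coeff 2 f / coeff 2 g)
  | n + 2 =>
    let φ : ℝ⟦X⟧ := mk fun i => if _ : i < n + 2 then transferCoeff f g i else 0
    (coeff (n + 3) f - coeff (n + 3) (pcomp g φ)) / (2 * coeff 2 g * transferCoeff f g 1)

theorem transferCoeff_one_pos {f g : ℝ⟦X⟧} (hf2 : 0 < coeff 2 f) (hg2 : 0 < coeff 2 g) :
    0 < transferCoeff f g 1 := by
  rw [transferCoeff]
  positivity

theorem pcomp_mk_transferCoeff {f g : ℝ⟦X⟧}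
    (hf0 : constantCoeff f = 0) (hf1 : coeff 1 f = 0) (hf2 : 0 < coeff 2 f)
    (hg0 : constantCoeff g = 0) (hg1 : coeff 1 g = 0) (hg2 : 0 < coeff 2 g) :
    pcomp g (mk (transferCoeff f g)) = f := by
  ext n
  match n with
  | 0 => simp [pcomp, hf0, hg0]
  | 1 => simp [pcomp, Finset.sum_range_succ, hf1, hg0, hg1]
  | 2 =>
    simp [pcomp, Finset.sum_range_succ, hg0, hg1, sq, coeff_mul, Finset.Nat.antidiagonal_succ,
      transferCoeff.eq_1, transferCoeff.eq_2, Real.mul_self_sqrt (div_pos hf2 hg2).le,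
      mul_div_cancel₀ _ hg2.ne']
  | m + 3 =>
    set ψ := mk (transferCoeff f g)
    set φ : ℝ⟦X⟧ := mk fun i => if _ : i < m + 2 then transferCoeff f g i else 0
    have hψφ : X ^ (m + 2) ∣ ψ - φ := X_pow_dvd_iff.mpr fun i hi => by simp [ψ, φ, hi]
    have key := coeff_pcomp_sub_coeff_pcomp hg1 (X_dvd_iff.mpr (by simp [ψ, transferCoeff]))
      (X_dvd_iff.mpr (by simp [φ, transferCoeff])) hψφ
    have hψn : coeff (m + 2) ψ = (coeff (m + 3) f - coeff (m + 3) (pcomp g φ)) /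
        (2 * coeff 2 g * transferCoeff f g 1) := by
      rw [coeff_mk, transferCoeff.eq_3]
    have hφn : coeff (m + 2) φ = 0 := by simp [φ]
    have hψ1 : coeff 1 ψ = transferCoeff f g 1 := coeff_mk _ _
    have hφ1 : coeff 1 φ = transferCoeff f g 1 := by simp [φ]
    rw [hψn, hφn, hψ1, hφ1, sub_eq_iff_eq_add] at key
    have hc1 := transferCoeff_one_pos hf2 hg2
    rw [key]
    field_simp
    ring

/-- If `f, g ∈ M(1)` are one-variable formal power series beginning with
positive-definite quadratic terms, there is a unique `ψ ∈ P₀(1)` (zero constant term,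
positive linear coefficient) with `f(ψ⁻¹(x)) = g(x)`, i.e. `g ∘ ψ = f`. -/
theorem unique_transfer_one_dim (f g : PowerSeries ℝ)
    (hf0 : PowerSeries.constantCoeff f = 0) (hf1 : PowerSeries.coeff 1 f = 0)
    (hf2 : 0 < PowerSeries.coeff 2 f)
    (hg0 : PowerSeries.constantCoeff g = 0) (hg1 : PowerSeries.coeff 1 g = 0)
    (hg2 : 0 < PowerSeries.coeff 2 g) :
    ∃! ψ : PowerSeries ℝ,
      PowerSeries.constantCoeff ψ = 0 ∧ 0 < PowerSeries.coeff 1 ψ ∧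
        pcomp g ψ = f := by
  have hcomp := pcomp_mk_transferCoeff hf0 hf1 hf2 hg0 hg1 hg2
  have hconst : constantCoeff (mk (transferCoeff f g)) = 0 := by simp [transferCoeff]
  have hlin : 0 < coeff 1 (mk (transferCoeff f g)) := by
    rw [coeff_mk]
    exact transferCoeff_one_pos hf2 hg2
  refine ⟨mk (transferCoeff f g), ⟨hconst, hlin, hcomp⟩, ?_⟩
  rintro ψ ⟨hψ0, hψ1, hψ⟩
  exact eq_of_pcomp_eq_pcomp hg1 hg2 hψ0 hconst hψ1 hlin (hψ.trans hcomp.symm)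
end

section
/- If f is a one-variable formal power series in M(1) that is even (f(-x) = f(x)) with f(x) = (1/2)f_2 x² + ... and f_2 > 0, then the unique ψ ∈ P_0(1) with f(ψ^{-1}(x)) = x² is an odd power series: ψ(-x) = -ψ(x). -/
open PowerSeries

/- Since `ψ² = f` is even, `ψ(-x)² = ψ(x)²`, so over an integral domain `ψ(-x) = ±ψ(x)`; comparing
linear coefficients rules out the `+` sign. -/

theorem PowerSeries.coeff_one_rescale_neg_one {R : Type*} [CommRing R] (φ : R⟦X⟧) :
    coeff 1 (rescale (-1) φ) = -coeff 1 φ := by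
  simp [coeff_rescale]

theorem PowerSeries.rescale_neg_one_eq_neg_of_sq {R : Type*} [CommRing R] [IsDomain R]
    [NeZero (2 : R)] {ψ : R⟦X⟧} (heven : rescale (-1) (ψ ^ 2) = ψ ^ 2)
    (hψ1 : coeff 1 ψ ≠ 0) : rescale (-1) ψ = -ψ := by
  rw [map_pow, sq, sq] at heven
  refine (mul_self_eq_mul_self_iff.mp heven).resolve_left fun h => hψ1 ?_
  have h1 := congrArg (coeff 1) h
  rw [coeff_one_rescale_neg_one, neg_eq_iff_add_eq_zero, ← two_mul] at h1
  exact (mul_eq_zero.mp h1).resolve_left two_ne_zero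

theorem morse_map_of_even_is_odd_general (f : PowerSeries ℝ)
    (heven : PowerSeries.rescale (-1) f = f)
    (ψ : PowerSeries ℝ)
    (hψ1 : 0 < PowerSeries.coeff 1 ψ)
    (hψf : ψ ^ 2 = f) :
    PowerSeries.rescale (-1) ψ = -ψ := by
  subst hψf
  exact rescale_neg_one_eq_neg_of_sq heven hψ1.ne'

/-- If `f ∈ M(1)` is even (`f(-x) = f(x)`), with `f = (1/2) f₂ x² + ⋯`, `f₂ > 0`,
then the unique `ψ ∈ P₀(1)` with `f(ψ⁻¹(x)) = x²` — equivalently `ψ² = f` — is an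
odd power series: `ψ(-x) = -ψ(x)`. -/
theorem morse_map_of_even_is_odd (f : PowerSeries ℝ)
    (hf0 : PowerSeries.constantCoeff f = 0) (hf1 : PowerSeries.coeff 1 f = 0)
    (hf2 : 0 < PowerSeries.coeff 2 f)
    (heven : PowerSeries.rescale (-1) f = f)
    (ψ : PowerSeries ℝ)
    (hψ0 : PowerSeries.constantCoeff ψ = 0)
    (hψ1 : 0 < PowerSeries.coeff 1 ψ)
    (hψf : ψ ^ 2 = f) :
    PowerSeries.rescale (-1) ψ = -ψ :=
  morse_map_of_even_is_odd_general f heven ψ hψ1 hψf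
end
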